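/- arXiv:2506.03526 — 4 statements merged into one kernel-verified Lean document; each statement's English description precedes it below -/
import Mathlib

section
/- If A and B have full column rank, then the spectral radius of I − (BᵀB/‖B‖_F²) ⊗ (AᵀA/‖A‖_F²) satisfies 0 ≤ ρ < 1, where ⊗ denotes the Kronecker product. -/
/-!
Write `M = BᵀB / ‖B‖_F²` and `N = AᵀA / ‖A‖_F²`. Full column rank makes `M` and `N` positive
definite, and Cauchy–Schwarz row by row gives `‖A x‖² ≤ ‖A‖_F² ‖x‖²`, i.e. `N ≤ 1` and `M ≤ 1`.
Hence `M ⊗ N` is positive definite while `1 - M ⊗ N = (1 - M) ⊗ N + 1 ⊗ (1 - N)` is positive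
semidefinite, so the spectrum of `1 - M ⊗ N` lies in `[0, 1)`.
-/

open Matrix Kronecker

noncomputable def frobSq {m n : ℕ} (A : Matrix (Fin m) (Fin n) ℝ) : ℝ :=
  ∑ i, ∑ j, (A i j) ^ 2

noncomputable def specRad {n₁ n₂ : ℕ} (M : Matrix (Fin n₂ × Fin n₁) (Fin n₂ × Fin n₁) ℝ) : ℝ :=
  sSup {r : ℝ | ∃ μ ∈ spectrum ℝ M, r = |μ|}

noncomputable def normalizedGram {m n : ℕ} (A : Matrix (Fin m) (Fin n) ℝ) :
    Matrix (Fin n) (Fin n) ℝ :=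
  (frobSq A)⁻¹ • (Aᵀ * A)

lemma Matrix.mulVec_injective_of_rank_eq_card {K m n : Type*} [Field K] [Fintype m] [Fintype n]
    {A : Matrix m n K} (hA : A.rank = Fintype.card n) : Function.Injective A.mulVec := by
  rw [mulVec_injective_iff, linearIndependent_iff_card_eq_finrank_span, Set.finrank,
    ← rank_eq_finrank_span_cols, hA]

lemma Matrix.dotProduct_transpose_mul_self_mulVec {R m n : Type*} [CommSemiring R] [Fintype m]
    [Fintype n] (A : Matrix m n R) (x : n → R) :
    x ⬝ᵥ (Aᵀ * A) *ᵥ x = (A *ᵥ x) ⬝ᵥ (A *ᵥ x) := by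
  rw [← mulVec_mulVec, dotProduct_mulVec, vecMul_transpose]

section frobSq

variable {m n : ℕ}

lemma frobSq_nonneg (A : Matrix (Fin m) (Fin n) ℝ) : 0 ≤ frobSq A :=
  Finset.sum_nonneg fun _ _ => Finset.sum_nonneg fun _ _ => sq_nonneg _

lemma frobSq_pos {A : Matrix (Fin m) (Fin n) ℝ} (hA : A ≠ 0) : 0 < frobSq A := by
  obtain ⟨i, j, hij⟩ : ∃ i j, A i j ≠ 0 := by
    by_contra! h
    exact hA (Matrix.ext h)
  exact Finset.sum_pos' (fun _ _ => Finset.sum_nonneg fun _ _ => sq_nonneg _)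
    ⟨i, Finset.mem_univ _, Finset.sum_pos' (fun _ _ => sq_nonneg _)
      ⟨j, Finset.mem_univ _, by positivity⟩⟩

lemma mulVec_dotProduct_self_le_frobSq_mul (A : Matrix (Fin m) (Fin n) ℝ) (x : Fin n → ℝ) :
    (A *ᵥ x) ⬝ᵥ (A *ᵥ x) ≤ frobSq A * (x ⬝ᵥ x) := by
  calc (A *ᵥ x) ⬝ᵥ (A *ᵥ x) = ∑ i, (∑ j, A i j * x j) ^ 2 := by
        simp [dotProduct, mulVec, sq]
    _ ≤ ∑ i, (∑ j, A i j ^ 2) * ∑ j, x j ^ 2 :=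
        Finset.sum_le_sum fun i _ => Finset.sum_mul_sq_le_sq_mul_sq _ _ _
    _ = frobSq A * (x ⬝ᵥ x) := by
        simp [frobSq, dotProduct, sq, Finset.sum_mul]

lemma posSemidef_normalizedGram (A : Matrix (Fin m) (Fin n) ℝ) :
    (normalizedGram A).PosSemidef :=
  (posSemidef_conjTranspose_mul_self A).smul (inv_nonneg.2 (frobSq_nonneg A))

lemma posDef_normalizedGram {A : Matrix (Fin m) (Fin n) ℝ} (hA : Function.Injective A.mulVec) :
    (normalizedGram A).PosDef := by
  refine .of_dotProduct_mulVec_pos (posSemidef_normalizedGram A).1 fun x hx => ?_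
  have hAx : A *ᵥ x ≠ 0 := fun h => hx (hA (h.trans (mulVec_zero A).symm))
  have hA0 : A ≠ 0 := by
    rintro rfl
    exact hAx (zero_mulVec x)
  rw [normalizedGram, smul_mulVec, dotProduct_smul, smul_eq_mul, star_trivial,
    dotProduct_transpose_mul_self_mulVec]
  exact mul_pos (inv_pos.2 (frobSq_pos hA0)) (by simpa using dotProduct_star_self_pos_iff.2 hAx)

lemma posSemidef_one_sub_normalizedGram (A : Matrix (Fin m) (Fin n) ℝ) :
    (1 - normalizedGram A).PosSemidef := by
  refine .of_dotProduct_mulVec_nonneg (isHermitian_one.sub (posSemidef_normalizedGram A).1)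
    fun x => ?_
  rw [star_trivial, sub_mulVec, one_mulVec, dotProduct_sub, normalizedGram, smul_mulVec,
    dotProduct_smul, smul_eq_mul, dotProduct_transpose_mul_self_mulVec, sub_nonneg]
  have hx : 0 ≤ x ⬝ᵥ x := by simpa using dotProduct_star_self_nonneg x
  calc (frobSq A)⁻¹ * ((A *ᵥ x) ⬝ᵥ (A *ᵥ x))
      ≤ (frobSq A)⁻¹ * (frobSq A * (x ⬝ᵥ x)) := by
        gcongr
        · exact inv_nonneg.2 (frobSq_nonneg A)
        · exact mulVec_dotProduct_self_le_frobSq_mul A x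
    _ ≤ x ⬝ᵥ x := by
        rw [← mul_assoc]
        exact mul_le_of_le_one_left hx inv_mul_le_one

end frobSq

open scoped ComplexOrder in
lemma Matrix.posSemidef_one_sub_kronecker {𝕜 m n : Type*} [RCLike 𝕜] [Fintype m] [Fintype n]
    [DecidableEq m] [DecidableEq n] {X : Matrix m m 𝕜} {Y : Matrix n n 𝕜}
    (hX : (1 - X).PosSemidef) (hY : Y.PosSemidef) (hY' : (1 - Y).PosSemidef) :
    (1 - X ⊗ₖ Y).PosSemidef := by
  have hsplit : 1 - X ⊗ₖ Y = (1 - X) ⊗ₖ Y + (1 : Matrix m m 𝕜) ⊗ₖ (1 - Y) := by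
    have hleft : (1 - X) ⊗ₖ Y = (1 : Matrix m m 𝕜) ⊗ₖ Y - X ⊗ₖ Y := by
      rw [eq_sub_iff_add_eq, ← add_kronecker, sub_add_cancel]
    have hright : (1 : Matrix m m 𝕜) ⊗ₖ (1 - Y) = 1 - (1 : Matrix m m 𝕜) ⊗ₖ Y := by
      rw [eq_sub_iff_add_eq, ← kronecker_add, sub_add_cancel, one_kronecker_one]
    rw [hleft, hright]
    abel
  rw [hsplit]
  exact (hX.kronecker hY).add (PosSemidef.one.kronecker hY')

section spectrum

variable {ι : Type*} [Fintype ι] [DecidableEq ι]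

lemma Matrix.PosDef.pos_of_mem_spectrum {K : Matrix ι ι ℝ} (hK : K.PosDef) {ν : ℝ}
    (hν : ν ∈ spectrum ℝ K) : 0 < ν := by
  refine lt_of_le_of_ne ?_ ?_
  · exact (posSemidef_iff_isHermitian_and_spectrum_nonneg.mp hK.posSemidef).2 hν
  · rintro rfl
    exact spectrum.zero_notMem ℝ hK.isUnit hν

lemma Matrix.spectrum_one_sub_subset_Ico {K : Matrix ι ι ℝ} (hK : K.PosDef)
    (hK' : (1 - K).PosSemidef) : spectrum ℝ (1 - K) ⊆ Set.Ico 0 1 := by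
  intro μ hμ
  refine ⟨(posSemidef_iff_isHermitian_and_spectrum_nonneg.mp hK').2 hμ, ?_⟩
  rw [← map_one (algebraMap ℝ (Matrix ι ι ℝ)), ← spectrum.singleton_sub_eq] at hμ
  obtain ⟨_, rfl, ν, hν, rfl⟩ := hμ
  linarith [hK.pos_of_mem_spectrum hν]

end spectrum

section specRad

variable {n₁ n₂ : ℕ}

lemma specRad_nonneg (M : Matrix (Fin n₂ × Fin n₁) (Fin n₂ × Fin n₁) ℝ) : 0 ≤ specRad M :=
  Real.sSup_nonneg (by rintro _ ⟨μ, -, rfl⟩; exact abs_nonneg μ)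

lemma specRad_lt_of_forall_abs_lt {M : Matrix (Fin n₂ × Fin n₁) (Fin n₂ × Fin n₁) ℝ} {r : ℝ}
    (hr : 0 < r) (h : ∀ μ ∈ spectrum ℝ M, |μ| < r) : specRad M < r := by
  let S := {t : ℝ | ∃ μ ∈ spectrum ℝ M, t = |μ|}
  change sSup S < r
  rcases S.eq_empty_or_nonempty with hS | hS
  · rwa [hS, Real.sSup_empty]
  · have hfin : S.Finite :=
      (M.finite_spectrum.image abs).subset (by rintro _ ⟨μ, hμ, rfl⟩; exact ⟨μ, hμ, rfl⟩)
    rw [hfin.csSup_lt_iff hS]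
    rintro _ ⟨μ, hμ, rfl⟩
    exact h μ hμ

end specRad

theorem stmt7 {m p n₁ n₂ : ℕ} (A : Matrix (Fin m) (Fin n₁) ℝ) (B : Matrix (Fin p) (Fin n₂) ℝ)
    (hA : A.rank = n₁) (hB : B.rank = n₂) :
    0 ≤ specRad (1 - ((frobSq B)⁻¹ • (Bᵀ * B)) ⊗ₖ ((frobSq A)⁻¹ • (Aᵀ * A))) ∧
      specRad (1 - ((frobSq B)⁻¹ • (Bᵀ * B)) ⊗ₖ ((frobSq A)⁻¹ • (Aᵀ * A))) < 1 := by
  have hM : (normalizedGram B).PosDef :=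
    posDef_normalizedGram (mulVec_injective_of_rank_eq_card (by rwa [Fintype.card_fin]))
  have hN : (normalizedGram A).PosDef :=
    posDef_normalizedGram (mulVec_injective_of_rank_eq_card (by rwa [Fintype.card_fin]))
  have hspec := spectrum_one_sub_subset_Ico (hM.kronecker hN)
    (posSemidef_one_sub_kronecker (posSemidef_one_sub_normalizedGram B) hN.posSemidef
      (posSemidef_one_sub_normalizedGram A))
  refine ⟨specRad_nonneg _, specRad_lt_of_forall_abs_lt one_pos fun μ hμ => ?_⟩
  obtain ⟨hμ₀, hμ₁⟩ := hspec hμ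
  rwa [abs_of_nonneg hμ₀]
end

section
/- If A and B have full column rank, then (I − (BᵀB/‖B‖_F²) ⊗ (AᵀA/‖A‖_F²))^k converges to the zero matrix as k → ∞. -/
/-!
The Gram matrices `BᵀB` and `AᵀA` are positive definite by full column rank, and
`‖A‖_F² = tr (AᵀA)`, so `P = (BᵀB / ‖B‖_F²) ⊗ₖ (AᵀA / ‖A‖_F²)` is positive definite with
`tr P ≤ 1`. Its eigenvalues are positive with sum at most one, hence lie in `(0, 1]`, so after
diagonalizing `P` by an orthogonal matrix the powers of `1 - P` become the scalar powers
`(1 - λᵢ)ᵏ` with `|1 - λᵢ| < 1`.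
-/

open Matrix Kronecker

open Filter Topology
open scoped ComplexOrder

lemma frobSq_eq_trace {m n : ℕ} (A : Matrix (Fin m) (Fin n) ℝ) : frobSq A = (Aᵀ * A).trace := by
  simp only [trace, diag, mul_apply, frobSq, transpose_apply, sq]
  exact Finset.sum_comm

namespace Matrix

lemma mulVec_injective_of_rank_eq_card_s8 {K m n : Type*} [Field K] [Fintype n]
    (A : Matrix m n K) (h : A.rank = Fintype.card n) : Function.Injective A.mulVec := by
  have hker := LinearMap.finrank_range_add_finrank_ker A.mulVecLin
  rw [← Matrix.rank, h, Module.finrank_fintype_fun_eq_card, Nat.add_eq_left,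
    Submodule.finrank_eq_zero] at hker
  exact LinearMap.ker_eq_bot.mp hker

lemma tendsto_diagonal_pow_nhds_zero {𝕜 n : Type*} [NormedField 𝕜] [Fintype n] [DecidableEq n]
    {d : n → 𝕜} (hd : ∀ i, ‖d i‖ < 1) :
    Tendsto (fun k : ℕ ↦ diagonal d ^ k) atTop (𝓝 0) := by
  simp_rw [diagonal_pow, ← diagonal_zero]
  exact (continuous_id.matrix_diagonal).tendsto _ |>.comp <|
    tendsto_pi_nhds.2 fun i ↦ tendsto_pow_atTop_nhds_zero_of_norm_lt_one (hd i)

variable {𝕜 n : Type*} [RCLike 𝕜] [Fintype n]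

lemma PosDef.conjTranspose_mul_self_of_rank_eq_card {m : Type*} [Fintype m] (A : Matrix m n 𝕜)
    (h : A.rank = Fintype.card n) : (Aᴴ * A).PosDef :=
  PosDef.conjTranspose_mul_self A (mulVec_injective_of_rank_eq_card_s8 A h)

lemma PosDef.inv_trace_smul {P : Matrix n n 𝕜} (hP : P.PosDef) : (P.trace⁻¹ • P).PosDef := by
  rcases isEmpty_or_nonempty n with _ | _
  · exact ⟨by ext i; exact isEmptyElim i, fun x hx ↦ (hx (Subsingleton.elim _ _)).elim⟩
  · exact hP.smul (inv_pos.2 hP.trace_pos)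

lemma re_trace_inv_trace_smul_le_one (P : Matrix n n 𝕜) :
    RCLike.re (P.trace⁻¹ • P).trace ≤ 1 := by
  rw [trace_smul, smul_eq_mul]
  rcases eq_or_ne P.trace 0 with h | h <;> simp [h]

variable [DecidableEq n] {P : Matrix n n 𝕜}

lemma PosSemidef.eigenvalues_le_re_trace (hP : P.PosSemidef) (i : n) :
    hP.1.eigenvalues i ≤ RCLike.re P.trace := by
  rw [hP.1.trace_eq_sum_eigenvalues, map_sum]
  simp only [RCLike.ofReal_re]
  exact Finset.single_le_sum (fun j _ ↦ hP.eigenvalues_nonneg j) (Finset.mem_univ i)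

open Unitary in
lemma IsHermitian.one_sub_eq (hP : P.IsHermitian) :
    1 - P = conjStarAlgAut 𝕜 _ hP.eigenvectorUnitary
      (diagonal fun i ↦ ((1 - hP.eigenvalues i : ℝ) : 𝕜)) := by
  conv_lhs => rw [hP.spectral_theorem, ← map_one (conjStarAlgAut 𝕜 _ hP.eigenvectorUnitary),
    ← map_sub, ← diagonal_one, diagonal_sub]
  simp only [Function.comp_apply, RCLike.ofReal_sub, RCLike.ofReal_one]

open Unitary in
lemma IsHermitian.tendsto_one_sub_pow_nhds_zero (hP : P.IsHermitian)
    (h : ∀ i, |1 - hP.eigenvalues i| < 1) :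
    Tendsto (fun k : ℕ ↦ (1 - P) ^ k) atTop (𝓝 0) := by
  set φ := conjStarAlgAut 𝕜 (Matrix n n 𝕜) hP.eigenvectorUnitary
  have hφ : Continuous φ := (continuous_const.mul continuous_id).mul continuous_const
  simp_rw [hP.one_sub_eq, ← map_pow]
  have := (hφ.tendsto 0).comp <|
    tendsto_diagonal_pow_nhds_zero fun i ↦ (RCLike.norm_ofReal (K := 𝕜) _).trans_lt (h i)
  rwa [map_zero] at this

lemma PosDef.tendsto_one_sub_pow_nhds_zero (hP : P.PosDef) (htr : RCLike.re P.trace ≤ 1) :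
    Tendsto (fun k : ℕ ↦ (1 - P) ^ k) atTop (𝓝 0) :=
  hP.1.tendsto_one_sub_pow_nhds_zero fun i ↦ abs_sub_lt_iff.2
    ⟨by linarith [hP.eigenvalues_pos i], by linarith [hP.posSemidef.eigenvalues_le_re_trace i]⟩

end Matrix

theorem stmt8 {m p n₁ n₂ : ℕ} (A : Matrix (Fin m) (Fin n₁) ℝ) (B : Matrix (Fin p) (Fin n₂) ℝ)
    (hA : A.rank = n₁) (hB : B.rank = n₂) :
    Filter.Tendsto
      (fun k : ℕ => (1 - ((frobSq B)⁻¹ • (Bᵀ * B)) ⊗ₖ ((frobSq A)⁻¹ • (Aᵀ * A))) ^ k)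
      Filter.atTop (nhds (0 : Matrix (Fin n₂ × Fin n₁) (Fin n₂ × Fin n₁) ℝ)) := by
  have hGramA : (Aᵀ * A).PosDef := by
    simpa using PosDef.conjTranspose_mul_self_of_rank_eq_card A (by simpa using hA)
  have hGramB : (Bᵀ * B).PosDef := by
    simpa using PosDef.conjTranspose_mul_self_of_rank_eq_card B (by simpa using hB)
  rw [frobSq_eq_trace, frobSq_eq_trace]
  refine (hGramB.inv_trace_smul.kronecker hGramA.inv_trace_smul).tendsto_one_sub_pow_nhds_zero ?_
  have hS := re_trace_inv_trace_smul_le_one (Bᵀ * B)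
  have hT := re_trace_inv_trace_smul_le_one (Aᵀ * A)
  simp only [RCLike.re_to_real, trace_kronecker] at hS hT ⊢
  exact mul_le_one₀ hS hGramA.inv_trace_smul.posSemidef.trace_nonneg hT
end

section
/- If ρ_k ≤ C k^{−α} for all k = 1,…,n with constants C > 0 and α > 1, and λ > 0, then ∑_{k=1}^{n} (1 + λ ρ_k^{−1})^{−1} ≤ C' λ^{−1/α} for a constant C' depending only on C and α. -/
/-!
With `T = (C / λ) ^ (1 / α)` each summand is at most `min 1 (ρ k / λ) ≤ min 1 ((T / k) ^ α)`.
The threshold at `k = T` is smoothed out by `min 1 (T / k) ≤ 2 T / (T + k)`, and the shifted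
series `∑ (T + k) ^ (-α)` is bounded by `∫_T^∞ x ^ (-α) dx = T ^ (1 - α) / (α - 1)`, so the whole
sum is at most `2 ^ α T / (α - 1)`.
-/

open Finset Real

lemma inv_one_add_mul_inv_le_min {lam ρ : ℝ} (hlam : 0 < lam) (hρ : 0 < ρ) :
    (1 + lam * ρ⁻¹)⁻¹ ≤ min 1 (ρ / lam) := by
  have hpos : 0 < lam * ρ⁻¹ := by positivity
  refine le_min (inv_le_one_of_one_le₀ (by linarith)) ?_
  calc (1 + lam * ρ⁻¹)⁻¹ ≤ (lam * ρ⁻¹)⁻¹ := inv_anti₀ hpos (by linarith)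
    _ = ρ / lam := by rw [mul_inv, inv_inv, div_eq_inv_mul]

lemma min_one_div_le_two_mul_div_add {T x : ℝ} (hT : 0 < T) (hx : 0 < x) :
    min 1 (T / x) ≤ 2 * T / (T + x) := by
  rcases le_or_gt x T with hxT | hTx
  · exact (min_le_left _ _).trans ((one_le_div (by positivity)).2 (by linarith))
  · refine (min_le_right _ _).trans ?_
    rw [div_le_div_iff₀ hx (by positivity)]
    nlinarith

lemma min_one_rpow_le_two_mul_div_add_rpow {T x α : ℝ} (hT : 0 < T) (hx : 0 < x) (hα : 0 ≤ α) :
    min 1 ((T / x) ^ α) ≤ (2 * T / (T + x)) ^ α := by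
  rcases min_le_iff.1 (min_one_div_le_two_mul_div_add hT hx) with h | h
  · exact (min_le_left _ _).trans (one_le_rpow h hα)
  · exact (min_le_right _ _).trans (rpow_le_rpow (by positivity) h hα)

lemma sum_Icc_add_rpow_neg_le {T α : ℝ} (hT : 0 < T) (hα : 1 < α) (n : ℕ) :
    ∑ k ∈ Icc 1 n, (T + k) ^ (-α) ≤ T ^ (1 - α) / (α - 1) := by
  have hanti : AntitoneOn (fun x : ℝ => x ^ (-α)) (Set.Icc T (T + n)) :=
    fun x hx y _ hxy => rpow_le_rpow_of_nonpos (hT.trans_le hx.1) hxy (by linarith)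
  have hint : ∫ x in T..T + n, x ^ (-α) = (T ^ (1 - α) - (T + n) ^ (1 - α)) / (α - 1) := by
    rw [integral_rpow (Or.inr ⟨by linarith, ?_⟩)]
    · rw [show -α + 1 = 1 - α by ring, ← neg_sub α 1, div_neg, ← neg_div, neg_sub]
    · rw [Set.uIcc_of_le (by linarith [n.cast_nonneg (α := ℝ)])]
      exact fun h => hT.not_ge h.1
  calc ∑ k ∈ Icc 1 n, (T + k) ^ (-α) = ∑ i ∈ range n, (T + ↑(i + 1)) ^ (-α) := by
        rw [range_eq_Ico, sum_Ico_add' (fun k : ℕ => (T + k) ^ (-α)) 0 n 1]; rfl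
    _ ≤ ∫ x in T..T + n, x ^ (-α) := hanti.sum_le_integral
    _ ≤ T ^ (1 - α) / (α - 1) := by
        rw [hint]
        gcongr
        exact sub_le_self _ (by positivity)

lemma sum_Icc_min_one_div_rpow_le {T α : ℝ} (hT : 0 < T) (hα : 1 < α) (n : ℕ) :
    ∑ k ∈ Icc 1 n, min 1 ((T / k) ^ α) ≤ 2 ^ α / (α - 1) * T := by
  calc ∑ k ∈ Icc 1 n, min 1 ((T / k) ^ α)
      ≤ ∑ k ∈ Icc 1 n, (2 * T) ^ α * (T + k) ^ (-α) := by
        refine sum_le_sum fun k hk => ?_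
        have hk : (0 : ℝ) < k := by exact_mod_cast (mem_Icc.1 hk).1
        rw [rpow_neg (by positivity), ← div_eq_mul_inv, ← div_rpow (by positivity) (by positivity)]
        exact min_one_rpow_le_two_mul_div_add_rpow hT hk (by linarith)
    _ = (2 * T) ^ α * ∑ k ∈ Icc 1 n, (T + k) ^ (-α) := (mul_sum ..).symm
    _ ≤ (2 * T) ^ α * (T ^ (1 - α) / (α - 1)) := by
        gcongr
        exact sum_Icc_add_rpow_neg_le hT hα n
    _ = 2 ^ α / (α - 1) * T := by
        rw [mul_rpow (by norm_num) hT.le, rpow_sub hT, rpow_one]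
        field_simp

theorem stmt13 (C α : ℝ) (hC : 0 < C) (hα : 1 < α) :
    ∃ C' > 0, ∀ (n : ℕ) (ρ : ℕ → ℝ) (lam : ℝ), 0 < lam →
      (∀ k ∈ Finset.Icc 1 n, 0 < ρ k ∧ ρ k ≤ C * (k : ℝ) ^ (-α)) →
      ∑ k ∈ Finset.Icc 1 n, (1 + lam * (ρ k)⁻¹)⁻¹ ≤ C' * lam ^ (-1 / α) := by
  refine ⟨2 ^ α / (α - 1) * C ^ (1 / α), by have := sub_pos.2 hα; positivity, ?_⟩
  intro n ρ lam hlam hρ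
  set T := (C / lam) ^ (1 / α) with hT
  have hT0 : 0 < T := by positivity
  have hTα : T ^ α = C / lam := by
    rw [hT, ← rpow_mul (by positivity), one_div_mul_cancel (by linarith), rpow_one]
  calc ∑ k ∈ Icc 1 n, (1 + lam * (ρ k)⁻¹)⁻¹
      ≤ ∑ k ∈ Icc 1 n, min 1 ((T / k) ^ α) := by
        refine sum_le_sum fun k hk => ?_
        obtain ⟨hρ0, hρC⟩ := hρ k hk
        have hk : (0 : ℝ) < k := by exact_mod_cast (mem_Icc.1 hk).1
        refine (inv_one_add_mul_inv_le_min hlam hρ0).trans (min_le_min_left _ ?_)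
        calc ρ k / lam ≤ C * k ^ (-α) / lam := by gcongr
          _ = (T / k) ^ α := by rw [div_rpow hT0.le hk.le, hTα, rpow_neg hk.le]; ring
    _ ≤ 2 ^ α / (α - 1) * T := sum_Icc_min_one_div_rpow_le hT0 hα n
    _ = 2 ^ α / (α - 1) * C ^ (1 / α) * lam ^ (-1 / α) := by
        rw [hT, div_rpow hC.le hlam.le, neg_div, rpow_neg hlam.le]
        ring
end

section
/- Define ‖u‖_λ² = ‖Qu‖² + λ‖u‖² for u ∈ ℝⁿ with λ > 0. If p̂* minimizes ‖Qp − qᵉ‖² + λ‖p‖² and qᵉ = Qp̄ + η for some p̄ ∈ ℝⁿ and η ∈ ℝᵐ, then ‖p̂* − p̄‖_λ ≤ λ^{1/2}‖p̄‖ + sup_{u ≠ 0} |(η, Qu)| / ‖u‖_λ. -/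
/-!
The minimizer satisfies the normal equations `Qᵀ(Q p̂ − qᵉ) + λ p̂ = 0`. Tested against
`w = p̂ − p̄` they give the energy identity `‖w‖_λ² = (η, Qw) − λ (p̄, w)`. The first term is at
most `D ‖w‖_λ`, where `D` is the supremum in the statement, and by Cauchy–Schwarz the second is at
most `λ ‖p̄‖ ‖w‖ ≤ λ^{1/2} ‖p̄‖ ‖w‖_λ`; dividing by `‖w‖_λ` gives the bound.
-/

open Matrix

noncomputable def euclidSq {ι : Type*} [Fintype ι] (x : ι → ℝ) : ℝ := ∑ i, (x i) ^ 2

/-- The norm `‖u‖_λ = (‖Qu‖² + λ‖u‖²)^{1/2}`. -/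
noncomputable def lamNorm {m n : ℕ} (Q : Matrix (Fin m) (Fin n) ℝ) (lam : ℝ)
    (u : Fin n → ℝ) : ℝ :=
  Real.sqrt (euclidSq (Q.mulVec u) + lam * euclidSq u)

section euclidSq

variable {ι : Type*} [Fintype ι]

lemma euclidSq_eq_dotProduct (x : ι → ℝ) : euclidSq x = x ⬝ᵥ x := by
  simp only [euclidSq, dotProduct, sq]

lemma euclidSq_nonneg (x : ι → ℝ) : 0 ≤ euclidSq x :=
  Finset.sum_nonneg fun _ _ => sq_nonneg _

lemma euclidSq_pos {x : ι → ℝ} (hx : x ≠ 0) : 0 < euclidSq x :=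
  (euclidSq_nonneg x).lt_of_ne fun h =>
    hx (dotProduct_self_eq_zero.mp (by rw [← euclidSq_eq_dotProduct, ← h]))

lemma euclidSq_add_smul (x y : ι → ℝ) (t : ℝ) :
    euclidSq (x + t • y) = euclidSq x + 2 * t * (x ⬝ᵥ y) + t ^ 2 * euclidSq y := by
  simp only [euclidSq_eq_dotProduct, dotProduct_add, add_dotProduct, dotProduct_smul,
    smul_dotProduct, smul_eq_mul, dotProduct_comm y x]
  ring

lemma abs_dotProduct_le_sqrt_euclidSq_mul (x y : ι → ℝ) :
    |x ⬝ᵥ y| ≤ √(euclidSq x) * √(euclidSq y) := by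
  refine abs_le.mpr ⟨?_, Real.sum_mul_le_sqrt_mul_sqrt _ x y⟩
  have h := Real.sum_mul_le_sqrt_mul_sqrt Finset.univ (-x) y
  simp only [Pi.neg_apply, neg_mul, Finset.sum_neg_distrib, neg_sq] at h
  exact neg_le.mpr h

end euclidSq

theorem tikhonov_normal_eq {ι κ : Type*} [Fintype ι] [Fintype κ] {Q : Matrix ι κ ℝ} {lam : ℝ}
    {q : ι → ℝ} {phat : κ → ℝ}
    (hmin : ∀ p : κ → ℝ, euclidSq (Q *ᵥ phat - q) + lam * euclidSq phat ≤
      euclidSq (Q *ᵥ p - q) + lam * euclidSq p) (v : κ → ℝ) :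
    (Q *ᵥ phat - q) ⬝ᵥ Q *ᵥ v + lam * (phat ⬝ᵥ v) = 0 := by
  set L := (Q *ᵥ phat - q) ⬝ᵥ Q *ᵥ v + lam * (phat ⬝ᵥ v)
  set C := euclidSq (Q *ᵥ v) + lam * euclidSq v
  have hquad : ∀ t : ℝ, 0 ≤ C * (t * t) + 2 * L * t + 0 := by
    intro t
    have h := hmin (phat + t • v)
    have hres : Q *ᵥ (phat + t • v) - q = (Q *ᵥ phat - q) + t • Q *ᵥ v := by
      rw [mulVec_add, mulVec_smul]; abel
    rw [hres, euclidSq_add_smul, euclidSq_add_smul] at h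
    linarith
  have hdiscr := discrim_le_zero hquad
  rw [discrim] at hdiscr
  nlinarith [sq_nonneg L]

section lamNorm

variable {m n : ℕ} (Q : Matrix (Fin m) (Fin n) ℝ) {lam : ℝ}

lemma lamNorm_nonneg (u : Fin n → ℝ) : 0 ≤ lamNorm Q lam u := Real.sqrt_nonneg _

lemma lamNorm_sq (hlam : 0 ≤ lam) (u : Fin n → ℝ) :
    lamNorm Q lam u ^ 2 = euclidSq (Q *ᵥ u) + lam * euclidSq u :=
  Real.sq_sqrt (add_nonneg (euclidSq_nonneg _) (mul_nonneg hlam (euclidSq_nonneg _)))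

lemma sqrt_euclidSq_mulVec_le_lamNorm (hlam : 0 ≤ lam) (u : Fin n → ℝ) :
    √(euclidSq (Q *ᵥ u)) ≤ lamNorm Q lam u :=
  Real.sqrt_le_sqrt (le_add_of_nonneg_right (mul_nonneg hlam (euclidSq_nonneg _)))

lemma sqrt_mul_sqrt_euclidSq_le_lamNorm (hlam : 0 ≤ lam) (u : Fin n → ℝ) :
    √lam * √(euclidSq u) ≤ lamNorm Q lam u := by
  rw [← Real.sqrt_mul hlam]
  exact Real.sqrt_le_sqrt (le_add_of_nonneg_left (euclidSq_nonneg _))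

lemma lamNorm_pos (hlam : 0 < lam) {u : Fin n → ℝ} (hu : u ≠ 0) : 0 < lamNorm Q lam u :=
  Real.sqrt_pos.mpr (add_pos_of_nonneg_of_pos (euclidSq_nonneg _)
    (mul_pos hlam (euclidSq_pos hu)))

lemma mul_abs_dotProduct_le_lamNorm (hlam : 0 ≤ lam) (x u : Fin n → ℝ) :
    lam * |x ⬝ᵥ u| ≤ √lam * √(euclidSq x) * lamNorm Q lam u :=
  calc lam * |x ⬝ᵥ u| ≤ (√lam * √lam) * (√(euclidSq x) * √(euclidSq u)) := by
        rw [Real.mul_self_sqrt hlam]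
        exact mul_le_mul_of_nonneg_left (abs_dotProduct_le_sqrt_euclidSq_mul x u) hlam
    _ = √lam * √(euclidSq x) * (√lam * √(euclidSq u)) := by ring
    _ ≤ √lam * √(euclidSq x) * lamNorm Q lam u := by
        gcongr; exact sqrt_mul_sqrt_euclidSq_le_lamNorm Q hlam u

noncomputable def lamDualNorm (lam : ℝ) (η : Fin m → ℝ) : ℝ :=
  sSup {r : ℝ | ∃ u : Fin n → ℝ, u ≠ 0 ∧ r = |η ⬝ᵥ Q *ᵥ u| / lamNorm Q lam u}

lemma bddAbove_lamDualNorm_set (hlam : 0 ≤ lam) (η : Fin m → ℝ) :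
    BddAbove {r : ℝ | ∃ u : Fin n → ℝ, u ≠ 0 ∧ r = |η ⬝ᵥ Q *ᵥ u| / lamNorm Q lam u} := by
  refine ⟨√(euclidSq η), ?_⟩
  rintro r ⟨u, -, rfl⟩
  refine div_le_of_le_mul₀ (lamNorm_nonneg Q u) (Real.sqrt_nonneg _) ?_
  exact (abs_dotProduct_le_sqrt_euclidSq_mul η (Q *ᵥ u)).trans
    (mul_le_mul_of_nonneg_left (sqrt_euclidSq_mulVec_le_lamNorm Q hlam u) (Real.sqrt_nonneg _))

lemma lamDualNorm_nonneg (lam : ℝ) (η : Fin m → ℝ) : 0 ≤ lamDualNorm Q lam η := by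
  refine Real.sSup_nonneg ?_
  rintro r ⟨u, -, rfl⟩
  exact div_nonneg (abs_nonneg _) (lamNorm_nonneg Q u)

lemma abs_dotProduct_mulVec_le_lamDualNorm_mul (hlam : 0 < lam) (η : Fin m → ℝ)
    (u : Fin n → ℝ) : |η ⬝ᵥ Q *ᵥ u| ≤ lamDualNorm Q lam η * lamNorm Q lam u := by
  rcases eq_or_ne u 0 with rfl | hu
  · simpa using mul_nonneg (lamDualNorm_nonneg Q lam η) (lamNorm_nonneg Q (lam := lam) 0)
  have hquot : |η ⬝ᵥ Q *ᵥ u| / lamNorm Q lam u ≤ lamDualNorm Q lam η :=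
    le_csSup (bddAbove_lamDualNorm_set Q hlam.le η) ⟨u, hu, rfl⟩
  exact (div_le_iff₀ (lamNorm_pos Q hlam hu)).mp hquot

end lamNorm

lemma lamNorm_sq_sub_eq {m n : ℕ} {Q : Matrix (Fin m) (Fin n) ℝ} {lam : ℝ} (hlam : 0 ≤ lam)
    {pbar phat : Fin n → ℝ} {η qe : Fin m → ℝ} (hqe : qe = Q *ᵥ pbar + η)
    (hmin : ∀ p : Fin n → ℝ, euclidSq (Q *ᵥ phat - qe) + lam * euclidSq phat ≤
      euclidSq (Q *ᵥ p - qe) + lam * euclidSq p) :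
    lamNorm Q lam (phat - pbar) ^ 2 =
      η ⬝ᵥ Q *ᵥ (phat - pbar) - lam * (pbar ⬝ᵥ (phat - pbar)) := by
  set w := phat - pbar
  have hnormal := tikhonov_normal_eq hmin w
  have hres : Q *ᵥ phat - qe = Q *ᵥ w - η := by rw [hqe, mulVec_sub]; abel
  have hphat : phat = w + pbar := (sub_add_cancel phat pbar).symm
  rw [hres, sub_dotProduct, hphat, add_dotProduct] at hnormal
  rw [lamNorm_sq Q hlam, euclidSq_eq_dotProduct, euclidSq_eq_dotProduct]
  linarith

theorem stmt16 {m n : ℕ} (Q : Matrix (Fin m) (Fin n) ℝ) (lam : ℝ) (hlam : 0 < lam)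
    (pbar : Fin n → ℝ) (η : Fin m → ℝ) (qe : Fin m → ℝ)
    (hqe : qe = Q.mulVec pbar + η) (phat : Fin n → ℝ)
    (hmin : ∀ p : Fin n → ℝ,
      euclidSq (Q.mulVec phat - qe) + lam * euclidSq phat ≤
        euclidSq (Q.mulVec p - qe) + lam * euclidSq p) :
    lamNorm Q lam (phat - pbar) ≤
      Real.sqrt lam * Real.sqrt (euclidSq pbar) +
        sSup {r : ℝ | ∃ u : Fin n → ℝ, u ≠ 0 ∧ r = |η ⬝ᵥ Q.mulVec u| / lamNorm Q lam u} := by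
  change _ ≤ _ + lamDualNorm Q lam η
  have henergy := lamNorm_sq_sub_eq hlam.le hqe hmin
  set w := phat - pbar
  have hnoise : η ⬝ᵥ Q *ᵥ w ≤ lamDualNorm Q lam η * lamNorm Q lam w :=
    (le_abs_self _).trans (abs_dotProduct_mulVec_le_lamDualNorm_mul Q hlam η w)
  have hbias : -(lam * (pbar ⬝ᵥ w)) ≤ √lam * √(euclidSq pbar) * lamNorm Q lam w :=
    calc -(lam * (pbar ⬝ᵥ w)) ≤ lam * |pbar ⬝ᵥ w| := by
          rw [← mul_neg]
          exact mul_le_mul_of_nonneg_left (neg_le_abs _) hlam.le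
      _ ≤ _ := mul_abs_dotProduct_le_lamNorm Q hlam.le pbar w
  have hsq : lamNorm Q lam w ^ 2 ≤
      (√lam * √(euclidSq pbar) + lamDualNorm Q lam η) * lamNorm Q lam w := by
    rw [henergy]; linarith
  nlinarith [lamNorm_nonneg Q (lam := lam) w, lamDualNorm_nonneg Q lam η,
    mul_nonneg (Real.sqrt_nonneg lam) (Real.sqrt_nonneg (euclidSq pbar))]
end
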